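/- arXiv:0910.2845 — 8 statements merged into one kernel-verified Lean document; each statement's English description precedes it below -/
import Mathlib

section
/- Let M be a finitely generated additive submonoid of ℤ^d, let E ⊆ M be a system of generators of M modulo U(M), and let x ∈ E. Suppose some y ∈ E reduces x, i.e. y ∉ U(M), y ≠ x, and x − y ∈ M. Then E \ {x} is again a system of generators of M modulo U(M). -/
/-- The unit group `U(M)` of an additive submonoid `M` of `ℤ^d`, as a set:
the elements `x ∈ M` with `-x ∈ M`. -/
def unitSet {d : ℕ} (M : AddSubmonoid (Fin d → ℤ)) : Set (Fin d → ℤ) :=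
  {x | x ∈ M ∧ -x ∈ M}

/-- `H` is a system of generators of `M` modulo `U(M)`: `H ⊆ M` and every element of `M`
is a finite sum of elements of `H` plus a unit, i.e. `M = ℤ₊H + U(M)`. -/
def IsGenModUnits {d : ℕ} (M : AddSubmonoid (Fin d → ℤ)) (H : Set (Fin d → ℤ)) : Prop :=
  H ⊆ (M : Set (Fin d → ℤ)) ∧
    ∀ m ∈ M, ∃ s ∈ AddSubmonoid.closure H, ∃ u ∈ unitSet M, m = s + u

/-!
If `y` reduces `x`, write `x - y` modulo units as `n • x + s` with `s` generated by `E \ {x}`.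
For `n ≥ 1` we would get `-y = (n - 1) • x + s + u ∈ M`, making `y` a unit; hence `n = 0` and
`x = y + s + u` is itself generated by `E \ {x}` modulo units, so `x` can be dropped from `E`.
-/

open AddSubmonoid

theorem AddSubmonoid.exists_nsmul_add_of_mem_closure {A : Type*} [AddCommMonoid A]
    {E : Set A} (x : A) {z : A} (hz : z ∈ AddSubmonoid.closure E) :
    ∃ n : ℕ, ∃ s ∈ AddSubmonoid.closure (E \ {x}), z = n • x + s := by
  have hE : E ⊆ {x} ∪ E \ {x} := by
    rw [Set.singleton_union, Set.insert_sdiff_singleton]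
    exact Set.subset_insert x E
  obtain ⟨_, hx, s, hs, rfl⟩ := mem_sup.1 (closure_union {x} (E \ {x}) ▸ closure_mono hE hz)
  obtain ⟨n, rfl⟩ := mem_closure_singleton.1 hx
  exact ⟨n, s, hs, rfl⟩

section

variable {d : ℕ} (M : AddSubmonoid (Fin d → ℤ))

def unitSubmonoid : AddSubmonoid (Fin d → ℤ) where
  carrier := unitSet M
  zero_mem' := ⟨M.zero_mem, by simp⟩
  add_mem' := fun ⟨ha, ha'⟩ ⟨hb, hb'⟩ =>
    ⟨M.add_mem ha hb, by simpa [neg_add_rev, add_comm] using M.add_mem ha' hb'⟩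

theorem unitSubmonoid_le : unitSubmonoid M ≤ M := fun _ hu => hu.1

variable {M}

theorem isGenModUnits_iff {H : Set (Fin d → ℤ)} :
    IsGenModUnits M H ↔ H ⊆ M ∧ M ≤ AddSubmonoid.closure H ⊔ unitSubmonoid M := by
  simp only [IsGenModUnits, SetLike.le_def, mem_sup, eq_comm (a := _ + _)]
  rfl

theorem closure_sup_unitSubmonoid_le {H : Set (Fin d → ℤ)} (hH : H ⊆ M) :
    AddSubmonoid.closure H ⊔ unitSubmonoid M ≤ M :=
  sup_le (closure_le.2 hH) (unitSubmonoid_le M)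

theorem IsGenModUnits.diff_singleton {E : Set (Fin d → ℤ)} (hE : IsGenModUnits M E)
    {x : Fin d → ℤ} (hx : x ∈ AddSubmonoid.closure (E \ {x}) ⊔ unitSubmonoid M) :
    IsGenModUnits M (E \ {x}) := by
  rw [isGenModUnits_iff] at hE ⊢
  refine ⟨Set.sdiff_subset.trans hE.1, hE.2.trans (sup_le ?_ le_sup_right)⟩
  refine closure_le.2 fun w hw => ?_
  by_cases hwx : w = x
  · exact hwx ▸ hx
  · exact le_sup_left (a := AddSubmonoid.closure (E \ {x})) (subset_closure ⟨hw, hwx⟩)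

theorem IsGenModUnits.mem_closure_diff_sup_of_reduces {E : Set (Fin d → ℤ)}
    (hE : IsGenModUnits M E) {x y : Fin d → ℤ} (hy : y ∈ E) (hyU : y ∉ unitSet M)
    (hyx : y ≠ x) (hxy : x - y ∈ M) :
    x ∈ AddSubmonoid.closure (E \ {x}) ⊔ unitSubmonoid M := by
  rw [isGenModUnits_iff] at hE
  set N := AddSubmonoid.closure (E \ {x}) ⊔ unitSubmonoid M
  have hNM : N ≤ M := closure_sup_unitSubmonoid_le (Set.sdiff_subset.trans hE.1)
  have hyM : y ∈ M := hE.1 hy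
  obtain ⟨s, hs, u, hu, hsu⟩ := mem_sup.1 (hE.2 hxy)
  obtain ⟨n, t, ht, rfl⟩ := exists_nsmul_add_of_mem_closure x hs
  have htu : t + u ∈ N := add_mem (mem_sup_left ht) (mem_sup_right hu)
  cases n with
  | zero =>
    have hx : x = y + (t + u) := by rw [show x = y + (x - y) by abel, ← hsu, zero_smul, zero_add]
    exact hx ▸ add_mem (mem_sup_left (subset_closure ⟨hy, hyx⟩)) htu
  | succ k =>
    have hxM : x ∈ M := by simpa using M.add_mem hyM hxy
    have hneg : -y = k • x + (t + u) := by
      rw [show -y = x - y - x by abel, ← hsu, succ_nsmul]; abel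
    exact absurd ⟨hyM, hneg ▸ M.add_mem (M.nsmul_mem hxM k) (hNM htu)⟩ hyU

end

theorem stmt0_general {d : ℕ} (M : AddSubmonoid (Fin d → ℤ))
    (E : Set (Fin d → ℤ)) (hE : IsGenModUnits M E)
    (x : Fin d → ℤ)
    (y : Fin d → ℤ) (hy : y ∈ E)
    (hyU : y ∉ unitSet M) (hyx : y ≠ x) (hxy : x - y ∈ M) :
    IsGenModUnits M (E \ {x}) :=
  hE.diff_singleton (hE.mem_closure_diff_sup_of_reduces hy hyU hyx hxy)

theorem stmt0 {d : ℕ} (M : AddSubmonoid (Fin d → ℤ)) (hFG : M.FG)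
    (E : Set (Fin d → ℤ)) (hE : IsGenModUnits M E)
    (x : Fin d → ℤ) (hx : x ∈ E)
    (y : Fin d → ℤ) (hy : y ∈ E)
    (hyU : y ∉ unitSet M) (hyx : y ≠ x) (hxy : x - y ∈ M) :
    IsGenModUnits M (E \ {x}) :=
  stmt0_general M E hE x y hy hyU hyx hxy
end

section
/- Let G be a subgroup of ℤ^d, let σ₁,…,σ_s : ℤ^d → ℤ be group homomorphisms, and let M = {x ∈ G : σᵢ(x) ≥ 0 for all i = 1,…,s}; assume M is finitely generated. Let σ : ℤ^d → ℤ^s be the map σ(x) = (σ₁(x),…,σ_s(x)), so that σ(M) is a submonoid of ℤ₊^s. Then a subset H ⊆ M is a Hilbert basis of M if and only if σ is injective on H and σ(H) is a Hilbert basis of the monoid σ(M). -/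
/-- `H` is a Hilbert basis of `M`. -/
def IsHilbertBasis {d : ℕ} (M : AddSubmonoid (Fin d → ℤ)) (H : Set (Fin d → ℤ)) : Prop :=
  IsGenModUnits M H ∧ ∀ H' ⊆ H, IsGenModUnits M H' → H' = H

/-- The standard map `σ = (σ₁, …, σ_s) : ℤ^d → ℤ^s` assembled from the linear forms `σᵢ`. -/
def standardMap {d s : ℕ} (σ : Fin s → ((Fin d → ℤ) →+ ℤ)) :
    (Fin d → ℤ) →+ (Fin s → ℤ) where
  toFun x := fun i => σ i x
  map_zero' := by funext i; simp
  map_add' x y := by funext i; simp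

/-!
Every unit of `M` lies in the kernel of `σ`, since `σ(M) ⊆ ℤ₊^s` has no nonzero units; conversely,
two elements of `M` with the same image under `σ` differ by an element of `G` on which every `σᵢ`
vanishes, i.e. by a unit of `M`. Hence `H ⊆ M` generates `M` modulo `U(M)` exactly when `σ(H)`
generates `σ(M)`, and minimality transfers along `σ` once one knows that a Hilbert basis cannot
contain two elements with the same image (dropping one of them would still give generators).
-/

section GeneratorsAlongMap

variable {d e : ℕ} {f : (Fin d → ℤ) →+ (Fin e → ℤ)} {M : AddSubmonoid (Fin d → ℤ)}

theorem map_eq_zero_of_mem_unitSet (hpt : unitSet (M.map f) ⊆ {0}) {u : Fin d → ℤ}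
    (hu : u ∈ unitSet M) : f u = 0 :=
  hpt ⟨⟨u, hu.1, rfl⟩, ⟨-u, hu.2, map_neg f u⟩⟩

theorem sub_mem_unitSet_of_map_eq (hfib : ∀ m ∈ M, ∀ t ∈ M, f m = f t → m - t ∈ M)
    {m t : Fin d → ℤ} (hm : m ∈ M) (ht : t ∈ M) (hmt : f m = f t) : m - t ∈ unitSet M :=
  ⟨hfib m hm t ht hmt, by simpa only [neg_sub] using hfib t ht m hm hmt.symm⟩

theorem isGenModUnits_map_iff (hpt : unitSet (M.map f) ⊆ {0})
    (hfib : ∀ m ∈ M, ∀ t ∈ M, f m = f t → m - t ∈ M) {H : Set (Fin d → ℤ)}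
    (hH : H ⊆ M) : IsGenModUnits M H ↔ IsGenModUnits (M.map f) (f '' H) := by
  constructor
  · rintro ⟨-, hgen⟩
    refine ⟨Set.image_mono hH |>.trans (AddSubmonoid.coe_map f M).symm.subset, ?_⟩
    rintro _ ⟨m, hm, rfl⟩
    obtain ⟨t, ht, u, hu, rfl⟩ := hgen m hm
    refine ⟨f t, ?_, 0, ⟨zero_mem _, by simp⟩, ?_⟩
    · rw [← AddMonoidHom.map_mclosure]
      exact ⟨t, ht, rfl⟩
    · rw [map_add, map_eq_zero_of_mem_unitSet hpt hu]
  · rintro ⟨-, hgen⟩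
    refine ⟨hH, fun m hm => ?_⟩
    obtain ⟨_, ht, u, hu, hmu⟩ := hgen (f m) ⟨m, hm, rfl⟩
    obtain rfl : u = 0 := hpt hu
    rw [← AddMonoidHom.map_mclosure] at ht
    obtain ⟨t, ht, rfl⟩ := ht
    have htM : t ∈ M := AddSubmonoid.closure_le.mpr hH ht
    exact ⟨t, ht, m - t, sub_mem_unitSet_of_map_eq hfib hm htM (by simpa using hmu), by abel⟩

variable (hgen : ∀ H ⊆ (M : Set (Fin d → ℤ)),
  IsGenModUnits M H ↔ IsGenModUnits (M.map f) (f '' H))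
include hgen

theorem IsHilbertBasis.injOn {H : Set (Fin d → ℤ)}
    (hB : IsHilbertBasis M H) : Set.InjOn f H := by
  intro x hx y hy hxy
  by_contra hne
  have himage : f '' (H \ {y}) = f '' H := by
    refine (Set.image_mono Set.sdiff_subset).antisymm ?_
    rintro _ ⟨z, hz, rfl⟩
    by_cases hzy : z = y
    · exact ⟨x, ⟨hx, hne⟩, hzy ▸ hxy⟩
    · exact ⟨z, ⟨hz, hzy⟩, rfl⟩
  have hdrop : IsGenModUnits M (H \ {y}) := by
    rw [hgen _ (Set.sdiff_subset.trans hB.1.1), himage, ← hgen _ hB.1.1]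
    exact hB.1
  have hy' : y ∈ H \ {y} := (hB.2 _ Set.sdiff_subset hdrop).symm ▸ hy
  exact hy'.2 rfl

theorem isHilbertBasis_iff_injOn_and_map {H : Set (Fin d → ℤ)} (hH : H ⊆ M) :
    IsHilbertBasis M H ↔ Set.InjOn f H ∧ IsHilbertBasis (M.map f) (f '' H) := by
  constructor
  · intro hB
    refine ⟨hB.injOn hgen, (hgen H hH).mp hB.1, fun K hK hKgen => ?_⟩
    have himage : f '' {h ∈ H | f h ∈ K} = K := by
      refine (Set.image_subset_iff.mpr fun _ hz => hz.2).antisymm ?_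
      intro k hk
      obtain ⟨h, hh, rfl⟩ := hK hk
      exact ⟨h, ⟨hh, hk⟩, rfl⟩
    have hsub : {h ∈ H | f h ∈ K} ⊆ H := Set.sep_subset _ _
    have hpre : IsGenModUnits M {h ∈ H | f h ∈ K} := by
      rwa [hgen _ (hsub.trans hH), himage]
    rw [← himage, hB.2 _ hsub hpre]
  · rintro ⟨hinj, hgenImg, hmin⟩
    refine ⟨(hgen H hH).mpr hgenImg, fun H' hH' hH'gen => hH'.antisymm fun h hh => ?_⟩
    have himage : f '' H' = f '' H :=
      hmin _ (Set.image_mono hH') ((hgen H' (hH'.trans hH)).mp hH'gen)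
    obtain ⟨h', hh', hfh⟩ : f h ∈ f '' H' := himage ▸ ⟨h, hh, rfl⟩
    exact hinj (hH' hh') hh hfh ▸ hh'

end GeneratorsAlongMap

section StandardMap

variable {d s : ℕ} {σ : Fin s → ((Fin d → ℤ) →+ ℤ)} {M : AddSubmonoid (Fin d → ℤ)}

theorem unitSet_map_standardMap_subset (hσ : ∀ x ∈ M, ∀ i, 0 ≤ σ i x) :
    unitSet (M.map (standardMap σ)) ⊆ {0} := by
  rintro _ ⟨⟨m, hm, rfl⟩, ⟨m', hm', hneg⟩⟩
  funext i
  have hi : σ i m' = -σ i m := congrFun hneg i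
  have := hσ m hm i
  have := hσ m' hm' i
  show σ i m = 0
  omega

theorem sub_mem_of_standardMap_eq {G : AddSubgroup (Fin d → ℤ)}
    (hM : (M : Set (Fin d → ℤ)) = {x | x ∈ G ∧ ∀ i, 0 ≤ σ i x}) :
    ∀ m ∈ M, ∀ t ∈ M, standardMap σ m = standardMap σ t → m - t ∈ M := by
  intro m hm t ht hmt
  rw [← SetLike.mem_coe, hM] at hm ht ⊢
  refine ⟨sub_mem hm.1 ht.1, fun i => ?_⟩
  have : σ i m = σ i t := congrFun hmt i
  simp [this]

end StandardMap

theorem stmt2_general {d s : ℕ} (G : AddSubgroup (Fin d → ℤ))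
    (σ : Fin s → ((Fin d → ℤ) →+ ℤ))
    (M : AddSubmonoid (Fin d → ℤ))
    (hM : (M : Set (Fin d → ℤ)) = {x | x ∈ G ∧ ∀ i, 0 ≤ σ i x})
    (H : Set (Fin d → ℤ)) (hH : H ⊆ (M : Set (Fin d → ℤ))) :
    IsHilbertBasis M H ↔
      (Set.InjOn (standardMap σ) H ∧
        IsHilbertBasis (M.map (standardMap σ)) (standardMap σ '' H)) := by
  have hσ : ∀ x ∈ M, ∀ i, 0 ≤ σ i x := fun x hx => ((Set.ext_iff.mp hM x).mp hx).2
  exact isHilbertBasis_iff_injOn_and_map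
    (fun _ hH' => isGenModUnits_map_iff (unitSet_map_standardMap_subset hσ)
      (sub_mem_of_standardMap_eq hM) hH') hH

theorem stmt2 {d s : ℕ} (G : AddSubgroup (Fin d → ℤ))
    (σ : Fin s → ((Fin d → ℤ) →+ ℤ))
    (M : AddSubmonoid (Fin d → ℤ))
    (hM : (M : Set (Fin d → ℤ)) = {x | x ∈ G ∧ ∀ i, 0 ≤ σ i x})
    (hFG : M.FG)
    (H : Set (Fin d → ℤ)) (hH : H ⊆ (M : Set (Fin d → ℤ))) :
    IsHilbertBasis M H ↔
      (Set.InjOn (standardMap σ) H ∧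
        IsHilbertBasis (M.map (standardMap σ)) (standardMap σ '' H)) :=
  stmt2_general G σ M hM H hH
end

section
/- Let M ⊆ N be additive submonoids of ℚ^d, and let C = ℝ₊M ⊆ ℝ^d be the set of all finite linear combinations of elements of M with nonnegative real coefficients. Then the integral closure of M in N, namely {y ∈ N : k·y ∈ M for some positive integer k}, equals C ∩ N. -/
/-!
By a conic Carathéodory argument, a point of `ℝ₊M` is a nonnegative real combination of
elements of `M` that are linearly independent over `ℝ`. If the point is rational, so are the
coefficients: otherwise the point together with those elements would be linearly independent
over `ℚ`, and linear independence of rational vectors persists over `ℝ`. Clearing denominators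
then puts a positive multiple of the point into `M`. Conversely, `y = k⁻¹ • (k • y)`.
-/

/-- The canonical embedding `ℚ^d → ℝ^d`. -/
noncomputable def ratToReal {d : ℕ} (x : Fin d → ℚ) : Fin d → ℝ :=
  fun i => (x i : ℝ)

/-- `ℝ₊M ⊆ ℝ^d`: all finite linear combinations of elements of `M ⊆ ℚ^d`
with nonnegative real coefficients. -/
def realCone {d : ℕ} (M : AddSubmonoid (Fin d → ℚ)) : Set (Fin d → ℝ) :=
  {y | ∃ (n : ℕ) (c : Fin n → ℝ) (v : Fin n → (Fin d → ℚ)),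
    (∀ i, 0 ≤ c i) ∧ (∀ i, v i ∈ M) ∧ y = ∑ i, c i • ratToReal (v i)}

open Finset

section ConicCaratheodory

variable {𝕜 E ι : Type*} [Field 𝕜] [LinearOrder 𝕜] [IsStrictOrderedRing 𝕜]
  [AddCommGroup E] [Module 𝕜 E] {w : ι → E}

theorem exists_nontrivial_relation_pos_of_not_linearIndepOn {s : Finset ι}
    (hs : ¬LinearIndepOn 𝕜 w s) : ∃ g : ι → 𝕜, ∑ i ∈ s, g i • w i = 0 ∧ ∃ i ∈ s, 0 < g i := by
  obtain ⟨g, hg, i, hi, hgi⟩ : ∃ g : ι → 𝕜, ∑ i ∈ s, g i • w i = 0 ∧ ∃ i ∈ s, g i ≠ 0 := by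
    simpa [linearIndepOn_finset_iff] using hs
  rcases hgi.lt_or_gt with hneg | hpos
  · exact ⟨-g, by simp [neg_smul, hg], i, hi, neg_pos.mpr hneg⟩
  · exact ⟨g, hg, i, hi, hpos⟩

/-- Subtract the largest multiple of a linear relation that keeps all coefficients nonnegative;
the coefficient attaining the minimal ratio `c i / g i` then vanishes. -/
theorem exists_nonneg_sum_erase_eq_of_not_linearIndepOn [DecidableEq ι] {s : Finset ι}
    (hs : ¬LinearIndepOn 𝕜 w s) {c : ι → 𝕜} (hc : ∀ i ∈ s, 0 ≤ c i) :
    ∃ i₀ ∈ s, ∃ c' : ι → 𝕜, (∀ i ∈ s, 0 ≤ c' i) ∧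
      ∑ i ∈ s.erase i₀, c' i • w i = ∑ i ∈ s, c i • w i := by
  obtain ⟨g, hg, hpos⟩ := exists_nontrivial_relation_pos_of_not_linearIndepOn hs
  obtain ⟨i₀, hi₀, hmin⟩ := {i ∈ s | 0 < g i}.exists_min_image (fun i => c i / g i)
    (by simpa [Finset.Nonempty] using hpos)
  rw [mem_filter] at hi₀
  set t := c i₀ / g i₀
  have ht : 0 ≤ t := div_nonneg (hc i₀ hi₀.1) hi₀.2.le
  refine ⟨i₀, hi₀.1, fun i => c i - t * g i, fun i hi => sub_nonneg.mpr ?_, ?_⟩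
  · rcases lt_or_ge 0 (g i) with hgi | hgi
    · exact (le_div_iff₀ hgi).mp (hmin i (mem_filter.mpr ⟨hi, hgi⟩))
    · exact (mul_nonpos_of_nonneg_of_nonpos ht hgi).trans (hc i hi)
  · rw [sum_erase _ (by simp [t, hi₀.2.ne'])]
    simp only [sub_smul, mul_smul, sum_sub_distrib, ← smul_sum, hg, smul_zero, sub_zero]

theorem exists_linearIndepOn_nonneg_sum_eq (s : Finset ι) {c : ι → 𝕜}
    (hc : ∀ i ∈ s, 0 ≤ c i) : ∃ t ⊆ s, LinearIndepOn 𝕜 w t ∧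
      ∃ c' : ι → 𝕜, (∀ i ∈ t, 0 ≤ c' i) ∧ ∑ i ∈ t, c' i • w i = ∑ i ∈ s, c i • w i := by
  classical
  induction s using Finset.strongInduction generalizing c with
  | H s ih =>
    by_cases hs : LinearIndepOn 𝕜 w s
    · exact ⟨s, subset_rfl, hs, c, hc, rfl⟩
    obtain ⟨i₀, hi₀, c', hc', hsum⟩ := exists_nonneg_sum_erase_eq_of_not_linearIndepOn hs hc
    obtain ⟨t, hts, ht, c'', hc'', hsum'⟩ :=
      ih _ (erase_ssubset hi₀) fun i hi => hc' i (mem_of_mem_erase hi)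
    exact ⟨t, hts.trans (erase_subset _ _), ht, c'', hc'', hsum'.trans hsum⟩

end ConicCaratheodory

theorem exists_algebraMap_eq_of_linearIndependent {K L ι ι' : Type*} [Field K] [Field L]
    [Algebra K L] [Fintype ι] [Finite ι'] {v : ι → ι' → K}
    (hv : LinearIndependent L fun i => algebraMap K L ∘ v i) {y : ι' → K} {c : ι → L}
    (hy : algebraMap K L ∘ y = ∑ i, c i • (algebraMap K L ∘ v i)) :
    ∃ q : ι → K, (∀ i, algebraMap K L (q i) = c i) ∧ y = ∑ i, q i • v i := by
  have hyL : algebraMap K L ∘ y ∈ Submodule.span L (Set.range fun i => algebraMap K L ∘ v i) :=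
    (Submodule.mem_span_range_iff_exists_fun L).mpr ⟨c, hy.symm⟩
  have hyK : y ∈ Submodule.span K (Set.range v) := by
    by_contra hy'
    have hind := linearIndependent_option'.mpr ⟨linearIndependent_algebraMap_comp_iff.mp hv, hy'⟩
    rw [← linearIndependent_algebraMap_comp_iff (S := L)] at hind
    have hcomp : (fun o : Option ι => algebraMap K L ∘ o.casesOn' y v) =
        fun o => o.casesOn' (algebraMap K L ∘ y) fun i => algebraMap K L ∘ v i := by
      ext (_ | i) <;> rfl
    rw [hcomp] at hind
    exact (linearIndependent_option'.mp hind).2 hyL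
  obtain ⟨q, rfl⟩ := (Submodule.mem_span_range_iff_exists_fun K).mp hyK
  refine ⟨q, fun i =>
    Fintype.linearIndependent_iffₛ.mp hv (fun i => algebraMap K L (q i)) c ?_ i, rfl⟩
  rw [← hy]
  ext j
  simp [Finset.sum_apply, Algebra.smul_def]

namespace AddSubmonoid

variable {A : Type*} [AddCommMonoid A]

def integralClosure (M : AddSubmonoid A) : AddSubmonoid A where
  carrier := {y | ∃ k : ℕ, 0 < k ∧ k • y ∈ M}
  add_mem' := by
    rintro a b ⟨k, hk, ha⟩ ⟨l, hl, hb⟩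
    refine ⟨k * l, Nat.mul_pos hk hl, ?_⟩
    rw [nsmul_add, mul_nsmul, mul_nsmul']
    exact add_mem (nsmul_mem ha l) (nsmul_mem hb k)
  zero_mem' := ⟨1, one_pos, by simp [zero_mem]⟩

theorem smul_mem_integralClosure {V : Type*} [AddCommGroup V] [Module ℚ V] {M : AddSubmonoid V}
    {q : ℚ} (hq : 0 ≤ q) {x : V} (hx : x ∈ M) : q • x ∈ M.integralClosure := by
  refine ⟨q.den, q.den_pos, ?_⟩
  rw [← Nat.cast_smul_eq_nsmul ℚ, smul_smul, Rat.den_mul_eq_num,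
    ← Int.toNat_of_nonneg (Rat.num_nonneg.mpr hq), Int.cast_natCast, Nat.cast_smul_eq_nsmul]
  exact nsmul_mem hx _

end AddSubmonoid

theorem ratToReal_eq_comp {d : ℕ} (x : Fin d → ℚ) : ratToReal x = algebraMap ℚ ℝ ∘ x := by
  ext; simp [ratToReal]

theorem ratToReal_mem_realCone_of_mem_integralClosure {d : ℕ} {M : AddSubmonoid (Fin d → ℚ)} {y : Fin d → ℚ}
    (hy : y ∈ M.integralClosure) : ratToReal y ∈ realCone M := by
  obtain ⟨k, hk, hkM⟩ := hy
  refine ⟨1, fun _ => (k : ℝ)⁻¹, fun _ => k • y, fun _ => by positivity, fun _ => hkM, ?_⟩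
  ext j
  simp [ratToReal, hk.ne']

theorem mem_integralClosure_of_ratToReal_mem_realCone {d : ℕ} {M : AddSubmonoid (Fin d → ℚ)}
    {y : Fin d → ℚ} (hy : ratToReal y ∈ realCone M) : y ∈ M.integralClosure := by
  obtain ⟨n, c, v, hc, hv, hy⟩ := hy
  obtain ⟨t, -, ht, c', hc', hsum⟩ :=
    exists_linearIndepOn_nonneg_sum_eq (w := fun i => ratToReal (v i)) univ fun i _ => hc i
  simp only [ratToReal_eq_comp] at hy hsum ht
  rw [← hsum, ← sum_coe_sort] at hy
  obtain ⟨q, hqc, rfl⟩ := exists_algebraMap_eq_of_linearIndependent ht hy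
  refine sum_mem fun i _ => AddSubmonoid.smul_mem_integralClosure ?_ (hv i)
  simpa [← hqc i] using hc' i i.2

theorem stmt3_general {d : ℕ} (M N : AddSubmonoid (Fin d → ℚ)) :
    {y : Fin d → ℚ | y ∈ N ∧ ∃ k : ℕ, 0 < k ∧ k • y ∈ M} =
      {y : Fin d → ℚ | y ∈ N ∧ ratToReal y ∈ realCone M} := by
  ext y
  exact and_congr_right fun _ =>
    ⟨ratToReal_mem_realCone_of_mem_integralClosure,
      mem_integralClosure_of_ratToReal_mem_realCone⟩

theorem stmt3 {d : ℕ} (M N : AddSubmonoid (Fin d → ℚ)) (hMN : M ≤ N) :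
    {y : Fin d → ℚ | y ∈ N ∧ ∃ k : ℕ, 0 < k ∧ k • y ∈ M} =
      {y : Fin d → ℚ | y ∈ N ∧ ratToReal y ∈ realCone M} :=
  stmt3_general M N
end

section
/- Let M ⊆ N be finitely generated additive submonoids of ℚ^d, and let C = ℝ₊M ⊆ ℝ^d be the set of all finite linear combinations of elements of M with nonnegative real coefficients. Then the integral closure of M in N, namely {y ∈ N : k·y ∈ M for some positive integer k} = C ∩ N, is a finitely generated monoid. -/
/-!
Over the rationals, the cone `ℚ₊M` is the saturation `{y | ∃ k > 0, k • y ∈ M}`, and a rational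
vector lies in `ℝ₊M` iff it lies in `ℚ₊M`: by the conic Carathéodory theorem it is a nonnegative
real combination of linearly independent rational generators, and such coefficients are forced to
be rational.

For finite generation, put `N` inside a lattice `L = q⁻¹ℤ^d`. Every point of `L ∩ ℚ₊M` is an
`ℕ`-combination of the generators of `M` plus a point of `L` in the parallelepiped they span, and
there are only finitely many of those; so `L ∩ ℚ₊M` is finitely generated. Finally
`N ∩ ℚ₊M = N ∩ (L ∩ ℚ₊M)`, and by Dickson's lemma the intersection of two finitely generated
submonoids of a cancellative commutative monoid is finitely generated.
-/

open PointedCone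

theorem AddSubmonoid.FG.inf {A : Type*} [AddCommMonoid A] [IsCancelAdd A] {P Q : AddSubmonoid A}
    (hP : P.FG) (hQ : Q.FG) : (P ⊓ Q).FG := by
  obtain ⟨m, f, rfl⟩ := fg_iff_exists_fin_addMonoidHom.mp hP
  obtain ⟨n, g, rfl⟩ := fg_iff_exists_fin_addMonoidHom.mp hQ
  set f' := f.comp (AddMonoidHom.fst _ (Fin n → ℕ))
  set g' := g.comp (AddMonoidHom.snd (Fin m → ℕ) _)
  suffices AddMonoidHom.mrange f ⊓ AddMonoidHom.mrange g = (f'.eqLocusM g').map f' from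
    this ▸ (fg_eqLocusM f' g').map f'
  ext y
  constructor
  · rintro ⟨⟨b, rfl⟩, ⟨c, hc⟩⟩
    exact ⟨(b, c), hc.symm, rfl⟩
  · rintro ⟨⟨b, c⟩, hbc, rfl⟩
    exact ⟨⟨b, rfl⟩, ⟨c, (hbc : f b = g c).symm⟩⟩

theorem PointedCone.mem_hull_iff_exists_nsmul_mem {V : Type*} [AddCommGroup V] [Module ℚ V]
    (M : AddSubmonoid V) {y : V} : y ∈ hull ℚ (M : Set V) ↔ ∃ k : ℕ, 0 < k ∧ k • y ∈ M := by
  constructor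
  · intro hy
    induction hy using Submodule.span_induction with
    | mem x hx => exact ⟨1, one_pos, by simpa using hx⟩
    | zero => exact ⟨1, one_pos, by simp⟩
    | add x z _ _ hx hz =>
      obtain ⟨k, hk, hkx⟩ := hx
      obtain ⟨l, hl, hlz⟩ := hz
      refine ⟨k * l, Nat.mul_pos hk hl, ?_⟩
      rw [smul_add, mul_comm, mul_smul, mul_comm, mul_smul]
      exact add_mem (nsmul_mem hkx l) (nsmul_mem hlz k)
    | smul c x _ hx =>
      obtain ⟨k, hk, hkx⟩ := hx
      -- `den c * c = num c ≥ 0` clears the denominator of `c`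
      refine ⟨(c : ℚ).den * k, Nat.mul_pos (c : ℚ).den_pos hk, ?_⟩
      have hnum : ((c : ℚ).num.toNat : ℚ) = (c : ℚ).den * c := by
        rw [Rat.den_mul_eq_num]; exact_mod_cast Int.toNat_of_nonneg (Rat.num_nonneg.mpr c.2)
      have : ((c : ℚ).den * k) • (c • x) = k • (c : ℚ).num.toNat • x := by
        rw [← Nonneg.coe_smul, ← Nat.cast_smul_eq_nsmul ℚ, ← Nat.cast_smul_eq_nsmul ℚ,
          ← Nat.cast_smul_eq_nsmul ℚ, smul_smul, smul_smul, hnum]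
        push_cast; ring_nf
      rw [this, smul_comm]
      exact nsmul_mem hkx _
  · rintro ⟨k, hk, hky⟩
    have : y = (⟨(k : ℚ)⁻¹, by positivity⟩ : {c : ℚ // 0 ≤ c}) • (k • y) := by
      rw [← Nonneg.coe_smul, ← Nat.cast_smul_eq_nsmul ℚ, inv_smul_smul₀ (by positivity)]
    rw [this]
    exact Submodule.smul_mem _ _ (Submodule.subset_span hky)

section Caratheodory
variable {K E ι : Type*} [Field K] [LinearOrder K] [IsStrictOrderedRing K] [AddCommGroup E]
  [Module K E]

theorem PointedCone.mem_hull_image_finset_iff {v : ι → E} {s : Finset ι} {x : E} :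
    x ∈ hull K (v '' s) ↔ ∃ c : ι → K, (∀ i ∈ s, 0 ≤ c i) ∧ ∑ i ∈ s, c i • v i = x := by
  classical
  constructor
  · rw [Finsupp.mem_span_image_iff_linearCombination]
    rintro ⟨l, hl, rfl⟩
    refine ⟨fun i => l i, fun i _ => (l i).2, ?_⟩
    rw [Finsupp.linearCombination_apply, Finsupp.sum_of_support_subset l hl _ (by simp)]
    simp [Nonneg.coe_smul]
  · rintro ⟨c, hc, rfl⟩
    refine Submodule.sum_mem _ fun i hi => ?_
    rw [show c i • v i = (⟨c i, hc i hi⟩ : {c : K // 0 ≤ c}) • v i from rfl]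
    exact Submodule.smul_mem _ _ (Submodule.subset_span ⟨i, hi, rfl⟩)

theorem PointedCone.exists_mem_hull_erase_of_sum_smul_eq_zero [DecidableEq ι] {v : ι → E}
    {s : Finset ι} {x : E} (hx : x ∈ hull K (v '' s)) {f : ι → K}
    (hf : ∑ i ∈ s, f i • v i = 0) (hpos : ∃ i ∈ s, 0 < f i) :
    ∃ p ∈ s, x ∈ hull K (v '' (s.erase p)) := by
  obtain ⟨c, hc, rfl⟩ := mem_hull_image_finset_iff.mp hx
  obtain ⟨p, hp, hmin⟩ := Finset.exists_min_image (s.filter (0 < f ·)) (fun i => c i / f i)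
    (by simpa [Finset.Nonempty] using hpos)
  rw [Finset.mem_filter] at hp
  -- subtract the largest multiple of the relation that keeps all coefficients nonnegative
  set t := c p / f p
  have ht : 0 ≤ t := div_nonneg (hc p hp.1) hp.2.le
  refine ⟨p, hp.1, mem_hull_image_finset_iff.mpr ⟨fun i => c i - t * f i, fun i hi => ?_, ?_⟩⟩
  · have hi := Finset.mem_of_mem_erase hi
    rcases le_or_gt (f i) 0 with hfi | hfi
    · nlinarith [hc i hi]
    · have := (le_div_iff₀ hfi).mp (hmin i (Finset.mem_filter.mpr ⟨hi, hfi⟩))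
      linarith
  · rw [Finset.sum_erase _ (by simp [t, div_mul_cancel₀ _ hp.2.ne'])]
    simp only [sub_smul, Finset.sum_sub_distrib, mul_smul, ← Finset.smul_sum, hf, smul_zero,
      sub_zero]

theorem PointedCone.exists_linearIndepOn_of_mem_hull {v : ι → E} {s : Finset ι} {x : E}
    (hx : x ∈ hull K (v '' s)) : ∃ t ⊆ s, LinearIndepOn K v t ∧ x ∈ hull K (v '' t) := by
  classical
  induction s using Finset.strongInduction with
  | H s ih =>
  by_cases hli : LinearIndepOn K v s
  · exact ⟨s, subset_rfl, hli, hx⟩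
  obtain ⟨f, hf, i, hi, hfi⟩ := not_linearIndepOn_finset_iff.mp hli
  obtain ⟨p, hp, hxp⟩ : ∃ p ∈ s, x ∈ hull K (v '' (s.erase p)) := by
    rcases hfi.lt_or_gt with hneg | hpos
    · exact exists_mem_hull_erase_of_sum_smul_eq_zero hx (f := -f)
        (by simp [neg_smul, Finset.sum_neg_distrib, hf]) ⟨i, hi, by simpa⟩
    · exact exists_mem_hull_erase_of_sum_smul_eq_zero hx hf ⟨i, hi, hpos⟩
  obtain ⟨t, hts, htli, hxt⟩ := ih _ (Finset.erase_ssubset hp) hxp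
  exact ⟨t, hts.trans (s.erase_subset p), htli, hxt⟩

end Caratheodory

section Parallelepiped
variable {K E : Type*} [Field K] [LinearOrder K] [IsStrictOrderedRing K] [FloorRing K]
  [AddCommGroup E] [Module K E]

variable (K) in
def Finset.parallelepiped (s : Finset E) : Set E :=
  {x | ∃ a : E → K, (∀ v ∈ s, a v ∈ Set.Icc 0 1) ∧ ∑ v ∈ s, a v • v = x}

theorem AddSubgroup.fg_inf_hull_of_finite_inter_parallelepiped (G : AddSubgroup E)
    {s : Finset E} (hs : (s : Set E) ⊆ G)
    (hfin : ((G : Set E) ∩ s.parallelepiped K).Finite) :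
    (G.toAddSubmonoid ⊓ (hull K (s : Set E)).toAddSubmonoid).FG := by
  classical
  have hs' : hull K (s : Set E) = hull K (id '' s) := by rw [Set.image_id]
  refine ⟨s ∪ hfin.toFinset, le_antisymm ?_ ?_⟩
  · rw [AddSubmonoid.closure_le, Finset.coe_union, Set.Finite.coe_toFinset, Set.union_subset_iff]
    refine ⟨fun v hv => ⟨hs hv, Submodule.subset_span hv⟩, ?_⟩
    rintro x ⟨hxG, a, ha, rfl⟩
    refine ⟨hxG, ?_⟩
    rw [SetLike.mem_coe, Submodule.mem_toAddSubmonoid, hs']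
    exact mem_hull_image_finset_iff.mpr ⟨a, fun v hv => (ha v hv).1, rfl⟩
  · rintro y ⟨hyG, hy⟩
    rw [SetLike.mem_coe, Submodule.mem_toAddSubmonoid, hs'] at hy
    obtain ⟨a, ha, rfl⟩ := mem_hull_image_finset_iff.mp hy
    set z := ∑ v ∈ s, (a v - ⌊a v⌋₊) • v
    have hsplit : ∑ v ∈ s, a v • id v = ∑ v ∈ s, ⌊a v⌋₊ • v + z := by
      simp only [z, id, ← Finset.sum_add_distrib, ← Nat.cast_smul_eq_nsmul K, ← add_smul,
        add_sub_cancel]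
    have hint : ∑ v ∈ s, ⌊a v⌋₊ • v ∈ AddSubmonoid.closure (↑(s ∪ hfin.toFinset) : Set E) :=
      sum_mem fun v hv => nsmul_mem (AddSubmonoid.subset_closure (by simp [hv])) _
    have hzG : z ∈ G := by
      rw [show z = ∑ v ∈ s, a v • id v - ∑ v ∈ s, ⌊a v⌋₊ • v by rw [hsplit]; abel]
      exact sub_mem hyG (sum_mem fun v hv => nsmul_mem (hs hv) _)
    have hzbox : z ∈ s.parallelepiped K :=
      ⟨_, fun v hv => ⟨sub_nonneg.mpr (Nat.floor_le (ha v hv)),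
        by linarith [Nat.lt_floor_add_one (a v)]⟩, rfl⟩
    rw [hsplit]
    exact add_mem hint (AddSubmonoid.subset_closure (by simp [hzG, hzbox]))
end Parallelepiped

theorem Rat.mem_zmultiples_inv_of_den_dvd {x : ℚ} {q : ℕ} (hq : q ≠ 0) (h : x.den ∣ q) :
    x ∈ AddSubgroup.zmultiples ((q : ℚ)⁻¹) := by
  obtain ⟨k, rfl⟩ := h
  refine ⟨x.num * k, ?_⟩
  have hk : (k : ℚ) ≠ 0 := by exact_mod_cast right_ne_zero_of_mul hq
  simp only [zsmul_eq_mul]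
  push_cast
  calc (x.num : ℚ) * k * (x.den * k : ℚ)⁻¹ = x.num / x.den := by field_simp
    _ = x := Rat.num_div_den x

theorem Rat.finite_zmultiples_inter_Icc {q : ℕ} (hq : 0 < q) (a b : ℚ) :
    ((AddSubgroup.zmultiples ((q : ℚ)⁻¹) : Set ℚ) ∩ Set.Icc a b).Finite := by
  refine ((Set.finite_Icc ⌊q * a⌋ ⌈q * b⌉).image fun z : ℤ => z • (q : ℚ)⁻¹).subset ?_
  rintro _ ⟨⟨z, rfl⟩, hza, hzb⟩
  have hq' : (0 : ℚ) < q := by exact_mod_cast hq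
  simp only [zsmul_eq_mul, ← div_eq_mul_inv] at hza hzb
  rw [le_div_iff₀ hq'] at hza
  rw [div_le_iff₀ hq'] at hzb
  refine ⟨z, ⟨?_, ?_⟩, rfl⟩
  · exact_mod_cast (Int.floor_le _).trans (by linarith : (q : ℚ) * a ≤ z)
  · exact_mod_cast (by linarith : (z : ℚ) ≤ q * b).trans (Int.le_ceil _)

def scaledIntegerLattice (d q : ℕ) : AddSubgroup (Fin d → ℚ) :=
  AddSubgroup.pi Set.univ fun _ => AddSubgroup.zmultiples ((q : ℚ)⁻¹)

theorem AddSubmonoid.FG.exists_le_scaledIntegerLattice {d : ℕ} {N : AddSubmonoid (Fin d → ℚ)}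
    (hN : N.FG) : ∃ q : ℕ, 0 < q ∧ N ≤ (scaledIntegerLattice d q).toAddSubmonoid := by
  obtain ⟨S, rfl⟩ := hN
  have hq : 0 < ∏ x ∈ S, ∏ j, (x j).den :=
    Finset.prod_pos fun x _ => Finset.prod_pos fun j _ => (x j).den_pos
  refine ⟨_, hq, AddSubmonoid.closure_le.mpr fun x hx j _ => ?_⟩
  exact Rat.mem_zmultiples_inv_of_den_dvd hq.ne'
    ((Finset.dvd_prod_of_mem (fun j => (x j).den) (Finset.mem_univ j)).trans
      (Finset.dvd_prod_of_mem (fun x => ∏ j, (x j).den) hx))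

theorem finite_scaledIntegerLattice_inter_parallelepiped {d q : ℕ} (hq : 0 < q)
    (s : Finset (Fin d → ℚ)) :
    ((scaledIntegerLattice d q : Set (Fin d → ℚ)) ∩ s.parallelepiped ℚ).Finite := by
  refine (Set.Finite.pi fun j => Rat.finite_zmultiples_inter_Icc hq
    (-∑ v ∈ s, |v j|) (∑ v ∈ s, |v j|)).subset ?_
  rintro _ ⟨hL, a, ha, rfl⟩ j -
  refine ⟨hL j (Set.mem_univ j), abs_le.mp ?_⟩
  rw [Finset.sum_apply]
  refine (Finset.abs_sum_le_sum_abs _ _).trans (Finset.sum_le_sum fun v hv => ?_)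
  rw [Pi.smul_apply, smul_eq_mul, abs_mul, abs_of_nonneg (ha v hv).1]
  exact mul_le_of_le_one_left (abs_nonneg _) (ha v hv).2

theorem ratToReal_sum_smul {d : ℕ} {ι : Type*} (s : Finset ι) (a : ι → ℚ) (v : ι → Fin d → ℚ) :
    ratToReal (∑ i ∈ s, a i • v i) = ∑ i ∈ s, (a i : ℝ) • ratToReal (v i) := by
  funext j
  simp [ratToReal, Finset.sum_apply]

theorem mem_span_of_ratToReal_mem_span {d : ℕ} {S : Set (Fin d → ℚ)} {y : Fin d → ℚ}
    (hy : ratToReal y ∈ Submodule.span ℝ (ratToReal '' S)) : y ∈ Submodule.span ℚ S := by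
  classical
  by_contra hyS
  obtain ⟨f, hfy, hSf⟩ := Submodule.exists_le_ker_of_notMem hyS
  let fℝ : (Fin d → ℝ) →ₗ[ℝ] ℝ :=
    ∑ j, ((f fun k => if j = k then 1 else 0 : ℚ) : ℝ) • LinearMap.proj j
  have hfℝ (x : Fin d → ℚ) : fℝ (ratToReal x) = f x := by
    rw [LinearMap.pi_apply_eq_sum_univ f x]
    simp [fℝ, ratToReal, mul_comm]
  have hker : Submodule.span ℝ (ratToReal '' S) ≤ LinearMap.ker fℝ := by
    rw [Submodule.span_le]
    rintro _ ⟨x, hx, rfl⟩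
    simpa [hfℝ] using hSf (Submodule.subset_span hx)
  exact hfy (by exact_mod_cast (hfℝ y).symm.trans (hker hy))

theorem mem_hull_of_ratToReal_mem_hull {d : ℕ} {ι : Type*} {v : ι → Fin d → ℚ} {s : Finset ι}
    {y : Fin d → ℚ} (hy : ratToReal y ∈ hull ℝ ((ratToReal ∘ v) '' s)) :
    y ∈ hull ℚ (v '' s) := by
  obtain ⟨t, hts, hli, hyt⟩ := exists_linearIndepOn_of_mem_hull hy
  obtain ⟨c, hc, hcy⟩ := mem_hull_image_finset_iff.mp hyt
  have hspan : y ∈ Submodule.span ℚ (v '' t) := by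
    refine mem_span_of_ratToReal_mem_span ?_
    rw [← Set.image_comp]
    exact hull_le_span ℝ _ hyt
  obtain ⟨a, hay⟩ := (Submodule.mem_span_image_finset_iff_exists_fun' ℚ).mp hspan
  have hac : ∀ i ∈ t, (a i : ℝ) = c i := by
    have := linearIndepOn_finset_iff.mp hli (fun i => (a i : ℝ) - c i) (by
      simpa [sub_smul, Finset.sum_sub_distrib, ← ratToReal_sum_smul, hay, sub_eq_zero]
        using hcy.symm)
    intro i hi
    linarith [this i hi]
  refine Submodule.span_mono (Set.image_mono hts)
    (mem_hull_image_finset_iff.mpr ⟨a, fun i hi => ?_, hay⟩)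
  exact_mod_cast (hac i hi).symm ▸ hc i hi

theorem ratToReal_mem_realCone_iff {d : ℕ} (M : AddSubmonoid (Fin d → ℚ)) {y : Fin d → ℚ} :
    ratToReal y ∈ realCone M ↔ y ∈ hull ℚ (M : Set (Fin d → ℚ)) := by
  constructor
  · rintro ⟨n, c, v, hc, hv, hy⟩
    have : ratToReal y ∈ hull ℝ ((ratToReal ∘ v) '' (Finset.univ : Finset (Fin n))) :=
      mem_hull_image_finset_iff.mpr ⟨c, fun i _ => hc i, hy.symm⟩
    refine Submodule.span_mono ?_ (mem_hull_of_ratToReal_mem_hull this)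
    rintro _ ⟨i, _, rfl⟩
    exact hv i
  · intro hy
    obtain ⟨n, c, v, rfl⟩ := Submodule.mem_span_set'.mp hy
    refine ⟨n, fun i => (c i : ℚ), fun i => v i, fun i => Rat.cast_nonneg.mpr (c i).2,
      fun i => (v i).2, ?_⟩
    simp_rw [← Nonneg.coe_smul]
    exact ratToReal_sum_smul _ _ _

/-- Gordan's lemma, extended version: for finitely generated submonoids `M ⊆ N` of `ℚ^d`,
the integral closure of `M` in `N`, which equals `ℝ₊M ∩ N`, is a finitely
generated monoid. -/
theorem stmt4 {d : ℕ} (M N : AddSubmonoid (Fin d → ℚ)) (hMN : M ≤ N)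
    (hM : M.FG) (hN : N.FG) :
    ∃ P : AddSubmonoid (Fin d → ℚ),
      (P : Set (Fin d → ℚ)) = {y | y ∈ N ∧ ∃ k : ℕ, 0 < k ∧ k • y ∈ M} ∧
      (P : Set (Fin d → ℚ)) = {y | y ∈ N ∧ ratToReal y ∈ realCone M} ∧
      P.FG := by
  let C := hull ℚ (M : Set (Fin d → ℚ))
  refine ⟨N ⊓ C.toAddSubmonoid, ?_, ?_, ?_⟩
  · ext y
    simp [C, mem_hull_iff_exists_nsmul_mem]
  · ext y
    simp [C, ratToReal_mem_realCone_iff]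
  obtain ⟨S, rfl⟩ := hM
  obtain ⟨q, hq, hNL⟩ := hN.exists_le_scaledIntegerLattice
  have hSL : (S : Set (Fin d → ℚ)) ⊆ scaledIntegerLattice d q :=
    fun x hx => hNL (hMN (AddSubmonoid.subset_closure hx))
  have hLC := (scaledIntegerLattice d q).fg_inf_hull_of_finite_inter_parallelepiped hSL
    (finite_scaledIntegerLattice_inter_parallelepiped hq S)
  rw [show C = hull ℚ S from Submodule.span_closure, ← inf_eq_left.mpr hNL, inf_assoc]
  exact hN.inf hLC
end

section
/- Let x₁,…,xₙ ∈ ℝ^d, let C = ℝ₊x₁ + ⋯ + ℝ₊xₙ and C' = ℝ₊x₁ + ⋯ + ℝ₊x_{n−1}. Suppose λ₁,…,λ_m are linear forms on ℝ^d such that C' = {x ∈ ℝ^d : λᵢ(x) ≥ 0 for i = 1,…,m}. Put P = {λᵢ : λᵢ(xₙ) > 0}, N = {λᵢ : λᵢ(xₙ) < 0}, and Z = {λᵢ : λᵢ(xₙ) = 0}. Then C = {x ∈ ℝ^d : μ(x) ≥ 0 for every μ ∈ P ∪ Z ∪ {λᵢ(xₙ)·λⱼ − λⱼ(xₙ)·λᵢ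 : λᵢ ∈ P, λⱼ ∈ N}}. -/
/-- The cone `ℝ₊x₁ + ⋯ + ℝ₊xₙ` generated by the vectors `x i`. -/
def rcone {n d : ℕ} (x : Fin n → (Fin d → ℝ)) : Set (Fin d → ℝ) :=
  {y | ∃ c : Fin n → ℝ, (∀ i, 0 ≤ c i) ∧ y = ∑ i, c i • x i}

/-!
A point `y` lies in `C` iff `y - t • xₙ ∈ C'` for some `t ≥ 0`, i.e. iff the one-variable system
`t ≥ 0, t · λᵢ(xₙ) ≤ λᵢ(y)` is solvable. Forms in `P` give upper bounds on `t`, forms in `N`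
lower bounds, and forms in `Z` no condition on `t`; eliminating `t` leaves exactly the conditions
`λ(y) ≥ 0` for `λ ∈ P ∪ Z` and "every lower bound is at most every upper bound", which is the
nonnegativity of the combinations `λᵢ(xₙ)·λⱼ − λⱼ(xₙ)·λᵢ`.
-/

theorem mem_rcone_succ_iff {n d : ℕ} (x : Fin (n + 1) → (Fin d → ℝ)) (y : Fin d → ℝ) :
    y ∈ rcone x ↔
      ∃ t : ℝ, 0 ≤ t ∧ y - t • x (Fin.last n) ∈ rcone (fun i : Fin n => x i.castSucc) := by
  constructor
  · rintro ⟨c, hc, rfl⟩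
    refine ⟨c (Fin.last n), hc _, fun i => c i.castSucc, fun i => hc _, ?_⟩
    rw [Fin.sum_univ_castSucc, add_sub_cancel_right]
  · rintro ⟨t, ht, c, hc, hy⟩
    refine ⟨Fin.snoc c t, Fin.lastCases (by simp [ht]) (fun i => by simpa using hc i), ?_⟩
    rw [Fin.sum_univ_castSucc]
    simp only [Fin.snoc_castSucc, Fin.snoc_last, ← hy, sub_add_cancel]

theorem exists_nonneg_mul_le_iff {ι : Type*} [Fintype ι] (a b : ι → ℝ) :
    (∃ t, 0 ≤ t ∧ ∀ i, t * a i ≤ b i) ↔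
      (∀ i, 0 ≤ a i → 0 ≤ b i) ∧ ∀ i j, 0 < a i → a j < 0 → 0 ≤ a i * b j - a j * b i := by
  classical
  constructor
  · rintro ⟨t, ht, h⟩
    refine ⟨fun i hi => (mul_nonneg ht hi).trans (h i), fun i j hi hj => ?_⟩
    nlinarith [h i, h j]
  · rintro ⟨hnonneg, hpair⟩
    set L := insert 0 ((Finset.univ.filter (a · < 0)).image fun j => b j / a j)
    have hL : L.Nonempty := Finset.insert_nonempty _ _
    refine ⟨L.max' hL, L.le_max' 0 (Finset.mem_insert_self _ _), fun i => ?_⟩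
    rcases lt_trichotomy (a i) 0 with hi | hi | hi
    · refine (div_le_iff_of_neg hi).1 (L.le_max' _ (Finset.mem_insert_of_mem ?_))
      exact Finset.mem_image_of_mem _ (by simpa using hi)
    · rw [hi, mul_zero]
      exact hnonneg i hi.ge
    · rw [← le_div_iff₀ hi]
      refine L.max'_le hL _ fun s hs => ?_
      rcases Finset.mem_insert.1 hs with rfl | hs
      · exact div_nonneg (hnonneg i hi.le) hi.le
      · obtain ⟨j, hj, rfl⟩ := Finset.mem_image.1 hs
        have hj : a j < 0 := by simpa using hj
        rw [div_le_iff_of_neg hj, div_mul_eq_mul_div, div_le_iff₀ hi]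
        linarith [hpair i j hi hj]

/-- Fourier–Motzkin elimination: the transformation of the support hyperplanes of
`C' = ℝ₊x₁ + ⋯ + ℝ₊x_{n-1}` into those of `C = ℝ₊x₁ + ⋯ + ℝ₊xₙ`. -/
theorem stmt5 {d n m : ℕ} (x : Fin (n + 1) → (Fin d → ℝ))
    (lam : Fin m → ((Fin d → ℝ) →ₗ[ℝ] ℝ))
    (hC' : rcone (fun i : Fin n => x i.castSucc) = {y | ∀ i, 0 ≤ lam i y}) :
    rcone x =
      {y | ∀ μ ∈
        ({l | ∃ i, 0 < lam i (x (Fin.last n)) ∧ l = lam i} ∪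
         {l | ∃ i, lam i (x (Fin.last n)) = 0 ∧ l = lam i} ∪
         {l | ∃ i j, 0 < lam i (x (Fin.last n)) ∧ lam j (x (Fin.last n)) < 0 ∧
            l = lam i (x (Fin.last n)) • lam j - lam j (x (Fin.last n)) • lam i} :
          Set ((Fin d → ℝ) →ₗ[ℝ] ℝ)),
        0 ≤ μ y} := by
  ext y
  have hshift : ∀ t, y - t • x (Fin.last n) ∈ rcone (fun i : Fin n => x i.castSucc) ↔
      ∀ i, t * lam i (x (Fin.last n)) ≤ lam i y := by
    intro t
    simp [hC', sub_nonneg]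
  simp_rw [mem_rcone_succ_iff, hshift, exists_nonneg_mul_le_iff]
  constructor
  · rintro ⟨hnonneg, hpair⟩ μ ((⟨i, hi, rfl⟩ | ⟨i, hi, rfl⟩) | ⟨i, j, hi, hj, rfl⟩)
    · exact hnonneg i hi.le
    · exact hnonneg i hi.ge
    · simpa using hpair i j hi hj
  · intro h
    refine ⟨fun i hi => ?_, fun i j hi hj => by simpa using h _ (.inr ⟨i, j, hi, hj, rfl⟩)⟩
    rcases hi.lt_or_eq with hi | hi
    · exact h _ (.inl (.inl ⟨i, hi, rfl⟩))
    · exact h _ (.inl (.inr ⟨i, hi.symm, rfl⟩))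
end

section
/- Let v₁,…,v_d ∈ ℤ^d be linearly independent over ℝ, D = ℝ₊v₁ + ⋯ + ℝ₊v_d, and E = par(v₁,…,v_d) ∩ ℤ^d. A point z ∈ ℤ^d lies in the topological interior of D in ℝ^d if and only if there exist x ∈ E and a₁,…,a_d ∈ ℤ₊ with z = (v₁ + ⋯ + v_d − x) + a₁v₁ + ⋯ + a_dv_d; moreover, such x and (a₁,…,a_d) are unique. -/
/-- The canonical embedding `ℤ^d → ℝ^d`. -/
noncomputable def intToReal {d : ℕ} (x : Fin d → ℤ) : Fin d → ℝ :=
  fun i => (x i : ℝ)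

/-- The simplicial cone `D = ℝ₊v₁ + ⋯ + ℝ₊v_d ⊆ ℝ^d`. -/
def simpCone {d : ℕ} (v : Fin d → (Fin d → ℤ)) : Set (Fin d → ℝ) :=
  {y | ∃ c : Fin d → ℝ, (∀ i, 0 ≤ c i) ∧ y = ∑ i, c i • intToReal (v i)}

/-- The semi-open parallelotope `par(v₁,…,v_d)`. -/
def parSet {d : ℕ} (v : Fin d → (Fin d → ℤ)) : Set (Fin d → ℝ) :=
  {y | ∃ c : Fin d → ℝ, (∀ i, 0 ≤ c i ∧ c i < 1) ∧ y = ∑ i, c i • intToReal (v i)}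

/-- `E = par(v₁,…,v_d) ∩ ℤ^d`. -/
def Epar {d : ℕ} (v : Fin d → (Fin d → ℤ)) : Set (Fin d → ℤ) :=
  {x | intToReal x ∈ parSet v}

/-!
Work in the coordinates of `ℝ^d` with respect to the basis `v`, and let `c` be the coordinate
vector of `z`. Then `z ∈ int D` iff every `cᵢ > 0`, and `x ∈ E` iff every coordinate of `x` lies
in `[0, 1)`. The relation `z = (Σ vᵢ − x) + Σ aᵢvᵢ` determines `x` from `a`, and in coordinates it
says `xᵢ = 1 + aᵢ − cᵢ`; so `x ∈ E` iff `aᵢ < cᵢ ≤ aᵢ + 1`, i.e. `aᵢ + 1 = ⌈cᵢ⌉`. Such an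
`aᵢ ∈ ℕ` exists, and is then unique, exactly when `cᵢ > 0`.
-/

open Module Set

theorem Module.Basis.eq_sum_smul_iff {ι R M : Type*} [Fintype ι] [CommSemiring R]
    [AddCommMonoid M] [Module R M] (b : Basis ι R M) (y : M) (c : ι → R) :
    y = ∑ i, c i • b i ↔ b.equivFun y = c := by
  rw [← b.equivFun_symm_apply, eq_comm, LinearEquiv.symm_apply_eq, eq_comm]

theorem Module.Basis.exists_forall_eq_sum_smul_iff {ι R M : Type*} [Fintype ι] [CommSemiring R]
    [AddCommMonoid M] [Module R M] (b : Basis ι R M) (p : R → Prop) (y : M) :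
    (∃ c : ι → R, (∀ i, p (c i)) ∧ y = ∑ i, c i • b i) ↔ ∀ i, p (b.equivFun y i) := by
  simp_rw [b.eq_sum_smul_iff]
  exact ⟨fun ⟨_, hc, hy⟩ => hy ▸ hc, fun h => ⟨_, h, rfl⟩⟩

theorem Module.Basis.interior_setOf_forall_equivFun_nonneg {ι E : Type*} [Fintype ι]
    [AddCommGroup E] [TopologicalSpace E] [IsTopologicalAddGroup E] [T2Space E] [Module ℝ E]
    [ContinuousSMul ℝ E] [FiniteDimensional ℝ E] (b : Basis ι ℝ E) :
    interior {y | ∀ i, 0 ≤ b.equivFun y i} = {y | ∀ i, 0 < b.equivFun y i} := by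
  let e := b.equivFun.toContinuousLinearEquiv.toHomeomorph
  have hpre : ∀ s : Set ℝ, {y | ∀ i, b.equivFun y i ∈ s} = e ⁻¹' univ.pi fun _ => s := by
    intro s; ext y; simp [e]
  have hIci := hpre (Ici 0)
  have hIoi := hpre (Ioi 0)
  simp only [mem_Ici, mem_Ioi] at hIci hIoi
  rw [hIci, hIoi, ← e.preimage_interior, interior_pi_set finite_univ]
  simp only [interior_Ici]

namespace SimplicialCone

variable {d : ℕ} {v : Fin d → Fin d → ℤ} (hv : LinearIndependent ℝ (fun i => intToReal (v i)))

noncomputable def basis : Basis (Fin d) ℝ (Fin d → ℝ) :=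
  basisOfLinearIndependentOfCardEqFinrank' _ hv (by simp)

@[simp]
theorem basis_apply (i : Fin d) : basis hv i = intToReal (v i) := by
  simp [basis]

noncomputable def coords : (Fin d → ℤ) →+ (Fin d → ℝ) :=
  (basis hv).equivFun.toAddMonoidHom.comp (AddMonoidHom.compLeft (Int.castAddHom ℝ) (Fin d))

theorem coords_apply (x : Fin d → ℤ) : coords hv x = (basis hv).equivFun (intToReal x) := rfl

theorem coords_self (j i : Fin d) : coords hv (v j) i = if j = i then 1 else 0 := by
  rw [coords_apply, ← basis_apply hv, Basis.equivFun_self]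

theorem simpCone_eq_setOf_nonneg : simpCone v = {y | ∀ i, 0 ≤ (basis hv).equivFun y i} := by
  ext y
  simp only [simpCone, mem_ofPred_eq, ← basis_apply hv]
  exact (basis hv).exists_forall_eq_sum_smul_iff (0 ≤ ·) y

theorem intToReal_mem_interior_simpCone_iff (z : Fin d → ℤ) :
    intToReal z ∈ interior (simpCone v) ↔ ∀ i, 0 < coords hv z i := by
  rw [simpCone_eq_setOf_nonneg hv, Basis.interior_setOf_forall_equivFun_nonneg]
  rfl

theorem mem_Epar_iff (x : Fin d → ℤ) :
    x ∈ Epar v ↔ ∀ i, 0 ≤ coords hv x i ∧ coords hv x i < 1 := by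
  simp only [Epar, parSet, mem_ofPred_eq, ← basis_apply hv]
  exact (basis hv).exists_forall_eq_sum_smul_iff (fun c => 0 ≤ c ∧ c < 1) _

theorem coords_sum_add_sum_smul_sub (a : Fin d → ℕ) (z : Fin d → ℤ) (i : Fin d) :
    coords hv ((∑ j, v j) + ∑ j, (a j : ℤ) • v j - z) i = 1 + a i - coords hv z i := by
  simp only [map_sub, map_add, map_sum, map_zsmul, Pi.sub_apply, Pi.add_apply, Finset.sum_apply,
    Pi.smul_apply, coords_self, smul_ite, smul_zero, Int.smul_one_eq_cast, Finset.sum_ite_eq',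
    Finset.mem_univ, if_true, Int.cast_natCast]

theorem mem_Epar_and_eq_iff (z x : Fin d → ℤ) (a : Fin d → ℕ) :
    (x ∈ Epar v ∧ z = ((∑ i, v i) - x) + ∑ i, (a i : ℤ) • v i) ↔
      x = (∑ i, v i) + ∑ i, (a i : ℤ) • v i - z ∧ ∀ i, ⌈coords hv z i⌉₊ = a i + 1 := by
  have hx : z = ((∑ i, v i) - x) + ∑ i, (a i : ℤ) • v i ↔
      x = (∑ i, v i) + ∑ i, (a i : ℤ) • v i - z := by
    constructor <;> intro h <;> rw [h] <;> abel
  rw [and_comm, hx, and_congr_right_iff]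
  rintro rfl
  simp only [mem_Epar_iff hv, coords_sum_add_sum_smul_sub hv,
    Nat.ceil_eq_iff (Nat.succ_ne_zero _), Nat.succ_sub_one, Nat.cast_succ]
  exact forall_congr' fun i => by constructor <;> intro h <;> constructor <;> linarith [h.1, h.2]

end SimplicialCone

open SimplicialCone in
/-- A lattice point lies in the topological interior of the simplicial cone `D`
if and only if it has a (necessarily unique) representation
`z = (v₁ + ⋯ + v_d − x) + a₁v₁ + ⋯ + a_dv_d` with `x ∈ E` and `aᵢ ∈ ℤ₊`. -/
theorem stmt8 {d : ℕ} (v : Fin d → (Fin d → ℤ))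
    (hv : LinearIndependent ℝ (fun i => intToReal (v i)))
    (z : Fin d → ℤ) :
    intToReal z ∈ interior (simpCone v) ↔
      ∃! p : (Fin d → ℤ) × (Fin d → ℕ),
        p.1 ∈ Epar v ∧ z = ((∑ i, v i) - p.1) + ∑ i, (p.2 i : ℤ) • v i := by
  simp only [intToReal_mem_interior_simpCone_iff hv, mem_Epar_and_eq_iff hv]
  constructor
  · intro hpos
    set a : Fin d → ℕ := fun i => ⌈coords hv z i⌉₊ - 1
    have ha : ∀ i, ⌈coords hv z i⌉₊ = a i + 1 := fun i =>
      (Nat.sub_one_add_one (Nat.ceil_pos.mpr (hpos i)).ne').symm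
    refine ⟨((∑ i, v i) + ∑ i, (a i : ℤ) • v i - z, a), ⟨rfl, ha⟩, ?_⟩
    rintro ⟨x', a'⟩ ⟨hx', ha'⟩
    obtain rfl : a' = a := funext fun i => Nat.succ_injective ((ha' i).symm.trans (ha i))
    exact Prod.ext hx' rfl
  · rintro ⟨⟨x, a⟩, ⟨-, ha⟩, -⟩ i
    exact Nat.ceil_pos.mp (ha i ▸ Nat.succ_pos _)
end

section
/- Let M be a finitely generated additive submonoid of ℤ^d and λ : ℤ^d → ℤ a group homomorphism with λ(u) = 0 for all u ∈ U(M). Let B ⊆ M be a system of generators of M modulo U(M), and let B_∞ be the smallest subset of ℤ^d containing B and closed under the operation: if x, y ∈ B_∞ with λ(x) > 0, λ(y) < 0 and x + y ≠ 0, then x + y ∈ B_∞. Set M⁺ = {m ∈ M : λ(m) ≥ 0}. Then U(M⁺) = U(M), and {x ∈ B_∞ : λ(x) ≥ 0} is a system of generators of M⁺ modulo U(M⁺). -/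
/-- `M⁺ = {m ∈ M : λ(m) ≥ 0}`, as an additive submonoid. -/
def posPart {d : ℕ} (M : AddSubmonoid (Fin d → ℤ)) (lam : (Fin d → ℤ) →+ ℤ) :
    AddSubmonoid (Fin d → ℤ) where
  carrier := {m | m ∈ M ∧ 0 ≤ lam m}
  zero_mem' := ⟨M.zero_mem, by simp⟩
  add_mem' := by
    rintro a b ⟨haM, ha⟩ ⟨hbM, hb⟩
    exact ⟨M.add_mem haM hbM, by rw [map_add]; omega⟩

/-- `T` is closed under the operation of the dual algorithm: for `x, y ∈ T` with
`λ(x) > 0`, `λ(y) < 0` and `x + y ≠ 0`, also `x + y ∈ T`. -/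
def SumClosed {d : ℕ} (lam : (Fin d → ℤ) →+ ℤ) (T : Set (Fin d → ℤ)) : Prop :=
  ∀ x ∈ T, ∀ y ∈ T, 0 < lam x → lam y < 0 → x + y ≠ 0 → x + y ∈ T

theorem Multiset.exists_pos_of_neg_mem_of_sum_nonneg {α : Type*} [AddCommMonoid α] [LinearOrder α]
    [IsOrderedAddMonoid α] [AddLeftStrictMono α] {s : Multiset α} {a : α} (ha : a ∈ s)
    (ha_neg : a < 0) (hs : 0 ≤ s.sum) : ∃ x ∈ s, 0 < x := by
  by_contra! hnonpos
  obtain ⟨t, rfl⟩ := Multiset.exists_cons_of_mem ha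
  have ht : t.sum ≤ 0 := by
    simpa using t.sum_le_card_nsmul 0 fun x hx => hnonpos x (Multiset.mem_cons_of_mem hx)
  rw [Multiset.sum_cons] at hs
  exact hs.not_gt (add_neg_of_neg_of_nonpos ha_neg ht)

section DualAlgorithm

variable {d : ℕ} {M : AddSubmonoid (Fin d → ℤ)} {lam : (Fin d → ℤ) →+ ℤ}

theorem unitSet_posPart (hlam : ∀ u ∈ unitSet M, lam u = 0) :
    unitSet (posPart M lam) = unitSet M := by
  ext u
  constructor
  · rintro ⟨⟨hu, -⟩, hnegu, -⟩
    exact ⟨hu, hnegu⟩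
  · intro hunit
    have hu0 := hlam u hunit
    exact ⟨⟨hunit.1, hu0.ge⟩, hunit.2, by simp [hu0]⟩

theorem sumClosed_addSubmonoid (M : AddSubmonoid (Fin d → ℤ)) (lam : (Fin d → ℤ) →+ ℤ) :
    SumClosed lam M :=
  fun _ hx _ hy _ _ _ => M.add_mem hx hy

theorem add_ne_zero_of_pos_of_mem (hlam : ∀ u ∈ unitSet M, lam u = 0) {x y : Fin d → ℤ}
    (hx : x ∈ M) (hy : y ∈ M) (hx_pos : 0 < lam x) : x + y ≠ 0 := by
  intro hxy
  rw [← eq_neg_iff_add_eq_zero] at hxy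
  subst hxy
  have hunit : -y ∈ unitSet M := ⟨hx, by rwa [neg_neg]⟩
  exact hx_pos.ne' (hlam _ hunit)

theorem multiset_sum_mem_closure_nonneg {T : Set (Fin d → ℤ)} (hT : SumClosed lam T)
    (hcancel : ∀ x ∈ T, ∀ y ∈ T, 0 < lam x → lam y < 0 → x + y ≠ 0)
    (s : Multiset (Fin d → ℤ)) (hsT : ∀ x ∈ s, x ∈ T) (hs : 0 ≤ lam s.sum) :
    s.sum ∈ AddSubmonoid.closure {x ∈ T | 0 ≤ lam x} := by
  induction hn : Multiset.card s using Nat.strong_induction_on generalizing s with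
  | _ n ih =>
  by_cases hnonneg : ∀ x ∈ s, 0 ≤ lam x
  · exact AddSubmonoid.multiset_sum_mem _ s fun x hx =>
      AddSubmonoid.subset_closure ⟨hsT x hx, hnonneg x hx⟩
  push Not at hnonneg
  obtain ⟨y, hys, hy⟩ := hnonneg
  obtain ⟨x, hxs, hx⟩ : ∃ x ∈ s, 0 < lam x := by
    rw [map_multiset_sum] at hs
    obtain ⟨_, hmem, hpos⟩ :=
      Multiset.exists_pos_of_neg_mem_of_sum_nonneg (Multiset.mem_map_of_mem lam hys) hy hs
    obtain ⟨x, hxs, rfl⟩ := Multiset.mem_map.mp hmem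
    exact ⟨x, hxs, hpos⟩
  obtain ⟨t, rfl⟩ := Multiset.exists_cons_of_mem hxs
  have hyt : y ∈ t := (Multiset.mem_cons.mp hys).resolve_left (by rintro rfl; omega)
  obtain ⟨r, rfl⟩ := Multiset.exists_cons_of_mem hyt
  have hxT := hsT x (Multiset.mem_cons_self _ _)
  have hyT := hsT y (Multiset.mem_cons_of_mem (Multiset.mem_cons_self _ _))
  have hsum : ((x + y) ::ₘ r).sum = (x ::ₘ y ::ₘ r).sum := by
    simp only [Multiset.sum_cons, add_assoc]
  rw [← hsum] at hs ⊢
  refine ih _ (by simp [← hn]) _ ?_ hs rfl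
  intro z hz
  rcases Multiset.mem_cons.mp hz with rfl | hzr
  · exact hT x hxT y hyT hx hy (hcancel x hxT y hyT hx hy)
  · exact hsT z (Multiset.mem_cons_of_mem (Multiset.mem_cons_of_mem hzr))

theorem mem_closure_nonneg_of_mem_closure {T : Set (Fin d → ℤ)} (hT : SumClosed lam T)
    (hcancel : ∀ x ∈ T, ∀ y ∈ T, 0 < lam x → lam y < 0 → x + y ≠ 0)
    {s : Fin d → ℤ} (hsT : s ∈ AddSubmonoid.closure T) (hs : 0 ≤ lam s) :
    s ∈ AddSubmonoid.closure {x ∈ T | 0 ≤ lam x} := by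
  obtain ⟨l, hlT, rfl⟩ := AddSubmonoid.exists_multiset_of_mem_closure hsT
  exact multiset_sum_mem_closure_nonneg hT hcancel l hlT hs

end DualAlgorithm

theorem stmt11_general {d : ℕ} (M : AddSubmonoid (Fin d → ℤ))
    (lam : (Fin d → ℤ) →+ ℤ) (hlam : ∀ u ∈ unitSet M, lam u = 0)
    (B : Set (Fin d → ℤ)) (hB : IsGenModUnits M B)
    (Binf : Set (Fin d → ℤ))
    (hB1 : B ⊆ Binf) (hB2 : SumClosed lam Binf)
    (hB3 : ∀ T : Set (Fin d → ℤ), B ⊆ T → SumClosed lam T → Binf ⊆ T) :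
    unitSet (posPart M lam) = unitSet M ∧
    IsGenModUnits (posPart M lam) {x ∈ Binf | 0 ≤ lam x} := by
  obtain ⟨hBM, hBgen⟩ := hB
  have hBinfM : Binf ⊆ M := hB3 M hBM (sumClosed_addSubmonoid M lam)
  have hunits := unitSet_posPart hlam
  refine ⟨hunits, fun x hx => ⟨hBinfM hx.1, hx.2⟩, ?_⟩
  rintro m ⟨hmM, hm⟩
  obtain ⟨s, hs, u, hu, rfl⟩ := hBgen m hmM
  have hs_nonneg : 0 ≤ lam s := by rwa [map_add, hlam u hu, add_zero] at hm
  have hcancel : ∀ x ∈ Binf, ∀ y ∈ Binf, 0 < lam x → lam y < 0 → x + y ≠ 0 :=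
    fun x hx y hy hx_pos _ => add_ne_zero_of_pos_of_mem hlam (hBinfM hx) (hBinfM hy) hx_pos
  refine ⟨s, ?_, u, hunits ▸ hu, rfl⟩
  exact mem_closure_nonneg_of_mem_closure hB2 hcancel (AddSubmonoid.closure_mono hB1 hs) hs_nonneg

/-- Correctness of the dual (Pottier) algorithm, case (a): `λ` vanishes on `U(M)`. -/
theorem stmt11 {d : ℕ} (M : AddSubmonoid (Fin d → ℤ)) (hFG : M.FG)
    (lam : (Fin d → ℤ) →+ ℤ) (hlam : ∀ u ∈ unitSet M, lam u = 0)
    (B : Set (Fin d → ℤ)) (hB : IsGenModUnits M B)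
    (Binf : Set (Fin d → ℤ))
    (hB1 : B ⊆ Binf) (hB2 : SumClosed lam Binf)
    (hB3 : ∀ T : Set (Fin d → ℤ), B ⊆ T → SumClosed lam T → Binf ⊆ T) :
    unitSet (posPart M lam) = unitSet M ∧
    IsGenModUnits (posPart M lam) {x ∈ Binf | 0 ≤ lam x} :=
  stmt11_general M lam hlam B hB Binf hB1 hB2 hB3
end

section
/- For a subset C ⊆ ℝ^d the following are equivalent: (i) there exist finitely many linear forms λ₁,…,λ_m on ℝ^d with rational coefficients (with respect to the standard basis) such that C = {x ∈ ℝ^d : λᵢ(x) ≥ 0 for all i}; (ii) there exist x₁,…,xₙ ∈ ℚ^d such that C = ℝ₊x₁ + ⋯ + ℝ₊xₙ, the set of linear combinations of the xᵢ with nonnegative real coefficients. -/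
/-!
Fourier–Motzkin elimination. For a linear form `φ`, the cone generated by a set `S` meets the
halfspace `φ ≥ 0` in the cone generated by the `u ∈ S` with `φ u ≥ 0` together with the vectors
`φ u • w - φ w • u` for `φ u ≥ 0 > φ w`. Dually, adding a ray `ℝ₊ w` to the cone cut out by
finitely many forms gives the cone cut out by the same combinations of the forms, now with
`φ = ⟨·, w⟩`. Both operations keep rational data rational, since the coefficients are values of
rational forms on rational vectors. Starting from `ℝ^d`, the cone over `±eⱼ`, whose dual cone is
`{0}`, and adding one halfspace, resp. one generator, at a time turns either description of a
cone into the other.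
-/

section OneVariable

open Set

variable {𝕜 : Type*} [Field 𝕜] [LinearOrder 𝕜] [IsStrictOrderedRing 𝕜]

theorem exists_nonneg_forall_mul_le {ι : Type*} {s : Set ι} (hs : s.Finite) (a b : ι → 𝕜)
    (hb : ∀ i ∈ s, 0 ≤ a i → 0 ≤ b i)
    (hab : ∀ i ∈ s, ∀ j ∈ s, 0 ≤ a i → a j < 0 → a j * b i ≤ a i * b j) :
    ∃ t, 0 ≤ t ∧ ∀ i ∈ s, t * a i ≤ b i := by
  obtain ⟨t, ht, htmax⟩ := (insert 0 ((fun j => b j / a j) '' {j ∈ s | a j < 0})).exists_max_image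
    id (((hs.sep _).image _).insert 0) (insert_nonempty _ _)
  refine ⟨t, htmax 0 (mem_insert _ _), fun i hi => ?_⟩
  rcases lt_trichotomy (a i) 0 with hai | hai | hai
  · exact (div_le_iff_of_neg hai).mp (htmax _ (mem_insert_of_mem _ ⟨i, ⟨hi, hai⟩, rfl⟩))
  · simp [hai, hb i hi hai.ge]
  · rw [← le_div_iff₀ hai]
    rcases ht with rfl | ⟨j, ⟨hj, haj⟩, rfl⟩
    · exact div_nonneg (hb i hi hai.le) hai.le
    · rw [div_le_iff_of_neg haj, div_mul_eq_mul_div, div_le_iff₀ hai]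
      linarith [hab i hi j hj hai.le haj]

end OneVariable

namespace PointedCone

open Set

section FourierMotzkin

variable {𝕜 E : Type*} [Field 𝕜] [LinearOrder 𝕜] [IsStrictOrderedRing 𝕜]
  [AddCommGroup E] [Module 𝕜 E] (φ : E →ₗ[𝕜] 𝕜)

def fourierMotzkinPair : E →ₗ[𝕜] E →ₗ[𝕜] E :=
  LinearMap.lsmul 𝕜 E ∘ₗ φ - (LinearMap.lsmul 𝕜 E ∘ₗ φ).flip

omit [LinearOrder 𝕜] [IsStrictOrderedRing 𝕜] in
lemma fourierMotzkinPair_apply (u w : E) : fourierMotzkinPair φ u w = φ u • w - φ w • u := rfl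

omit [LinearOrder 𝕜] [IsStrictOrderedRing 𝕜] in
lemma map_fourierMotzkinPair (u w : E) : φ (fourierMotzkinPair φ u w) = 0 := by
  simp [fourierMotzkinPair_apply, mul_comm]

def fourierMotzkin (S : Set E) : Set E :=
  {u ∈ S | 0 ≤ φ u} ∪ image2 (fourierMotzkinPair φ · ·) {u ∈ S | 0 ≤ φ u} {w ∈ S | φ w < 0}

variable {φ} {S : Set E}

omit [IsStrictOrderedRing 𝕜] in
lemma _root_.Set.Finite.fourierMotzkin (hS : S.Finite) : (fourierMotzkin φ S).Finite :=
  (hS.sep _).union ((hS.sep _).image2 _ (hS.sep _))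

lemma fourierMotzkin_subset :
    fourierMotzkin φ S ⊆ (hull 𝕜 S ⊓ (positive 𝕜 𝕜).comap φ : PointedCone 𝕜 E) := by
  rintro _ (⟨hu, hφu⟩ | ⟨u, ⟨hu, hφu⟩, w, ⟨hw, hφw⟩, rfl⟩)
  · exact ⟨subset_hull hu, hφu⟩
  refine ⟨?_, by simp [map_fourierMotzkinPair]⟩
  simp only [SetLike.mem_coe, fourierMotzkinPair_apply]
  rw [sub_eq_add_neg, ← neg_smul]
  exact add_mem (smul_mem _ hφu (subset_hull hw)) (smul_mem _ (by linarith) (subset_hull hu))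

lemma eq_zero_of_mem_hull_of_neg (hS : ∀ u ∈ S, φ u < 0) {x : E} (hx : x ∈ hull 𝕜 S)
    (hφx : 0 ≤ φ x) : x = 0 := by
  suffices φ x ≤ 0 ∧ (φ x = 0 → x = 0) from this.2 (le_antisymm this.1 hφx)
  clear hφx
  induction hx using Submodule.span_induction with
  | mem u hu => exact ⟨(hS u hu).le, fun h => absurd h (hS u hu).ne⟩
  | zero => simp
  | add x y _ _ hx hy =>
    refine ⟨by simpa using add_nonpos hx.1 hy.1, fun h => ?_⟩
    rw [map_add] at h
    rw [hx.2 (by linarith [hy.1]), hy.2 (by linarith [hx.1]), add_zero]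
  | smul c x _ hx =>
    rw [← Nonneg.coe_smul, map_smul, smul_eq_mul]
    refine ⟨mul_nonpos_of_nonneg_of_nonpos c.2 hx.1, fun h => ?_⟩
    rcases mul_eq_zero.mp h with hc | hφ
    · rw [hc, zero_smul]
    · rw [hx.2 hφ, smul_zero]

lemma fourierMotzkinPair_mem_hull {G B : Set E} {g b : E} (hg : g ∈ hull 𝕜 G)
    (hb : b ∈ hull 𝕜 B) :
    fourierMotzkinPair φ g b ∈ hull 𝕜 (image2 (fourierMotzkinPair φ · ·) G B) := by
  have := Submodule.apply_mem_map₂ (LinearMap.restrictScalars₁₂ _ _ (fourierMotzkinPair φ)) hg hb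
  rwa [Submodule.map₂_span_span] at this

theorem hull_inf_comap_positive :
    hull 𝕜 S ⊓ (positive 𝕜 𝕜).comap φ = hull 𝕜 (fourierMotzkin φ S) := by
  refine le_antisymm ?_ (Submodule.span_le.mpr fourierMotzkin_subset)
  intro x hx
  obtain ⟨hx, hφx⟩ := Submodule.mem_inf.mp hx
  set G := {u ∈ S | 0 ≤ φ u}
  set B := {w ∈ S | φ w < 0}
  have hS : S = G ∪ B := by
    ext u
    rcases le_or_gt 0 (φ u) with h | h
    · simp [G, B, h, not_lt_of_ge h]
    · simp [G, B, h, not_le_of_gt h]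
  have hG : hull 𝕜 G ≤ hull 𝕜 (fourierMotzkin φ S) := Submodule.span_mono subset_union_left
  have hGB : hull 𝕜 (image2 (fourierMotzkinPair φ · ·) G B) ≤ hull 𝕜 (fourierMotzkin φ S) :=
    Submodule.span_mono subset_union_right
  rw [hS, hull, Submodule.span_union, Submodule.mem_sup] at hx
  obtain ⟨g, hg, b, hb, rfl⟩ := hx
  have hφg : 0 ≤ φ g :=
    (Submodule.span_le.mpr fun u hu => hu.2 : hull 𝕜 G ≤ (positive 𝕜 𝕜).comap φ) hg
  replace hφx : 0 ≤ φ g + φ b := by simpa [mem_positive] using hφx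
  rcases hφg.eq_or_lt with hφg0 | hφgpos
  · obtain rfl : b = 0 := eq_zero_of_mem_hull_of_neg (fun w hw => hw.2) hb (by linarith)
    simpa using hG hg
  · have hgb : g + b = (φ g)⁻¹ • ((φ g + φ b) • g + fourierMotzkinPair φ g b) := by
      rw [fourierMotzkinPair_apply, add_smul, smul_add, smul_sub, smul_add, smul_smul, smul_smul,
        smul_smul, inv_mul_cancel₀ hφgpos.ne']
      module
    rw [hgb]
    exact smul_mem _ (inv_nonneg.2 hφg)
      (add_mem (smul_mem _ hφx (hG hg)) (hGB (fourierMotzkinPair_mem_hull hg hb)))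

variable {M N : Type*} [AddCommGroup M] [Module 𝕜 M] [AddCommGroup N] [Module 𝕜 N]

theorem dual_sup_hull_singleton (p : M →ₗ[𝕜] N →ₗ[𝕜] 𝕜) {S : Set M} (hS : S.Finite) (w : N) :
    dual p S ⊔ hull 𝕜 {w} = dual p (fourierMotzkin (p.flip w) S) := by
  refine le_antisymm (sup_le ?_ ?_) fun x hx => ?_
  · rw [← dual_hull]
    exact dual_anti fun u hu => (fourierMotzkin_subset hu).1
  · rw [hull, Submodule.span_le, singleton_subset_iff]
    exact fun u hu => (fourierMotzkin_subset hu).2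
  · obtain ⟨t, ht, hta⟩ := exists_nonneg_forall_mul_le hS (p.flip w) (p · x)
      (fun u hu hφu => hx (Or.inl ⟨hu, hφu⟩))
      (fun u hu v hv hφu hφv => by
        simpa [fourierMotzkinPair_apply, sub_nonneg] using
          hx (Or.inr ⟨u, ⟨hu, hφu⟩, v, ⟨hv, hφv⟩, rfl⟩))
    refine Submodule.mem_sup.mpr
      ⟨x - t • w, fun u hu => ?_, t • w, smul_mem _ ht (subset_hull rfl), sub_add_cancel _ _⟩
    simpa [sub_nonneg] using hta u hu

end FourierMotzkin

theorem mem_hull_range_iff {𝕜 ι E : Type*} [Semiring 𝕜] [PartialOrder 𝕜] [IsOrderedRing 𝕜]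
    [Fintype ι] [AddCommMonoid E] [Module 𝕜 E] {u : ι → E} {x : E} :
    x ∈ hull 𝕜 (range u) ↔ ∃ c : ι → 𝕜, (∀ i, 0 ≤ c i) ∧ x = ∑ i, c i • u i := by
  rw [hull, Submodule.mem_span_range_iff_exists_fun]
  constructor
  · rintro ⟨c, rfl⟩
    exact ⟨fun i => c i, fun i => (c i).2, rfl⟩
  · rintro ⟨c, hc, rfl⟩
    exact ⟨fun i => ⟨c i, hc i⟩, rfl⟩

end PointedCone

namespace MinkowskiWeyl

open Set PointedCone

variable {κ : Type*}

def castVec (v : κ → ℚ) : κ → ℝ := fun j => v j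

def IsFiniteRat (T : Set (κ → ℝ)) : Prop := T.Finite ∧ T ⊆ range castVec

lemma IsFiniteRat.mono {S T : Set (κ → ℝ)} (hT : IsFiniteRat T) (hST : S ⊆ T) : IsFiniteRat S :=
  ⟨hT.1.subset hST, hST.trans hT.2⟩

lemma isFiniteRat_range {ι : Type*} [Finite ι] (v : ι → κ → ℚ) :
    IsFiniteRat (range (castVec ∘ v)) :=
  ⟨finite_range _, range_comp_subset_range _ _⟩

lemma IsFiniteRat.exists_fin_range_eq {T : Set (κ → ℝ)} (hT : IsFiniteRat T) :
    ∃ (n : ℕ) (v : Fin n → κ → ℚ), range (castVec ∘ v) = T := by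
  obtain ⟨n, f, -, rfl⟩ := hT.1.fin_param
  choose v hv using fun i => hT.2 (mem_range_self i)
  exact ⟨n, v, congrArg range (funext hv)⟩

lemma castVec_dotProduct [Fintype κ] (u v : κ → ℚ) :
    castVec u ⬝ᵥ castVec v = ((u ⬝ᵥ v : ℚ) : ℝ) := by
  simp [castVec, dotProduct]

lemma IsFiniteRat.fourierMotzkin {φ : (κ → ℝ) →ₗ[ℝ] ℝ} {T : Set (κ → ℝ)} (hT : IsFiniteRat T)
    (hφ : ∀ u, ∃ r : ℚ, φ (castVec u) = r) : IsFiniteRat (fourierMotzkin φ T) := by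
  refine ⟨hT.1.fourierMotzkin, ?_⟩
  rintro _ (⟨hu, -⟩ | ⟨_, ⟨hu, -⟩, _, ⟨hw, -⟩, rfl⟩)
  · exact hT.2 hu
  obtain ⟨u, rfl⟩ := hT.2 hu
  obtain ⟨w, rfl⟩ := hT.2 hw
  obtain ⟨r, hr⟩ := hφ u
  obtain ⟨s, hs⟩ := hφ w
  refine ⟨r • w - s • u, funext fun j => ?_⟩
  simp [castVec, fourierMotzkinPair_apply, hr, hs]

variable [Fintype κ]

theorem exists_isFiniteRat_hull_eq_top : ∃ T : Set (κ → ℝ), IsFiniteRat T ∧ hull ℝ T = ⊤ := by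
  classical
  set e : κ → κ → ℚ := fun j => Pi.single j 1
  refine ⟨range (castVec ∘ e) ∪ range (castVec ∘ (-e)),
    ⟨(finite_range _).union (finite_range _),
      union_subset (range_comp_subset_range _ _) (range_comp_subset_range _ _)⟩,
    eq_top_iff.mpr fun x _ => ?_⟩
  rw [← Finset.univ_sum_single x]
  refine sum_mem fun j _ => ?_
  rcases le_total 0 (x j) with h | h
  · have hj : Pi.single j (x j) = x j • castVec (e j) := by
      ext i; by_cases hi : i = j <;> simp [castVec, e, hi]
    rw [hj]
    exact smul_mem _ h (subset_hull (Or.inl ⟨j, rfl⟩))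
  · have hj : Pi.single j (x j) = (-x j) • castVec ((-e) j) := by
      ext i; by_cases hi : i = j <;> simp [castVec, e, hi]
    rw [hj]
    exact smul_mem _ (neg_nonneg.2 h) (subset_hull (Or.inr ⟨j, rfl⟩))

theorem exists_hull_eq_dual {S : Set (κ → ℝ)} (hS : IsFiniteRat S) :
    ∃ T, IsFiniteRat T ∧ hull ℝ T = dual (dotProductBilin ℝ ℝ) S := by
  induction S, hS.1 using Set.Finite.induction_on with
  | empty =>
    obtain ⟨T, hT, hTtop⟩ := exists_isFiniteRat_hull_eq_top (κ := κ)
    exact ⟨T, hT, by rw [hTtop, dual_empty]⟩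
  | @insert q S' _ _ ih =>
    obtain ⟨T, hT, hTS'⟩ := ih (hS.mono (subset_insert _ _))
    obtain ⟨q, rfl⟩ := hS.2 (mem_insert q S')
    refine ⟨fourierMotzkin (dotProductBilin ℝ ℝ (castVec q)) T,
      hT.fourierMotzkin fun u => ⟨q ⬝ᵥ u, castVec_dotProduct q u⟩, ?_⟩
    rw [dual_insert, ← hTS', dual_singleton, inf_comm, hull_inf_comap_positive]

theorem exists_dual_eq_hull {S : Set (κ → ℝ)} (hS : IsFiniteRat S) :
    ∃ T, IsFiniteRat T ∧ dual (dotProductBilin ℝ ℝ) T = hull ℝ S := by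
  induction S, hS.1 using Set.Finite.induction_on with
  | empty =>
    obtain ⟨T, hT, hTtop⟩ := exists_isFiniteRat_hull_eq_top (κ := κ)
    refine ⟨T, hT, ?_⟩
    rw [← dual_hull, hTtop, Submodule.top_coe, dual_univ, hull, Submodule.span_empty,
      Submodule.zero_eq_bot]
    exact fun y y' h => dotProduct_eq y y' fun x => by simpa [dotProduct_comm] using congr($h x)
  | @insert w S' _ _ ih =>
    obtain ⟨T, hT, hTS'⟩ := ih (hS.mono (subset_insert _ _))
    obtain ⟨w, rfl⟩ := hS.2 (mem_insert w S')
    refine ⟨fourierMotzkin ((dotProductBilin ℝ ℝ).flip (castVec w)) T,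
      hT.fourierMotzkin fun u => ⟨u ⬝ᵥ w, castVec_dotProduct u w⟩, ?_⟩
    rw [← dual_sup_hull_singleton _ hT.1, hTS', hull, hull, hull, Submodule.span_insert, sup_comm]

lemma setOf_forall_nonneg_eq_dual {ι : Type*} (q : ι → κ → ℚ) :
    {x : κ → ℝ | ∀ i, 0 ≤ ∑ j, (q i j : ℝ) * x j} =
      dual (dotProductBilin ℝ ℝ) (range (castVec ∘ q)) := by
  ext x
  simp [castVec, dotProduct]

omit [Fintype κ] in
lemma setOf_exists_nonneg_sum_eq_hull {ι : Type*} [Fintype ι] (v : ι → κ → ℚ) :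
    {y | ∃ c : ι → ℝ, (∀ i, 0 ≤ c i) ∧ y = ∑ i, c i • (fun j => ((v i j : ℚ) : ℝ))} =
      hull ℝ (range (castVec ∘ v)) := by
  ext y
  rw [SetLike.mem_coe, mem_hull_range_iff]
  rfl

end MinkowskiWeyl

/-- The theorem of Minkowski–Weyl: a subset `C ⊆ ℝ^d` is a finite intersection of
rational linear halfspaces if and only if it is the cone generated by finitely many
rational vectors. -/
theorem stmt18 {d : ℕ} (C : Set (Fin d → ℝ)) :
    (∃ (m : ℕ) (q : Fin m → (Fin d → ℚ)),
        C = {x | ∀ i, 0 ≤ ∑ j, (q i j : ℝ) * x j}) ↔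
    (∃ (n : ℕ) (v : Fin n → (Fin d → ℚ)),
        C = {y | ∃ c : Fin n → ℝ, (∀ i, 0 ≤ c i) ∧
          y = ∑ i, c i • (fun j => ((v i j : ℚ) : ℝ))}) := by
  simp only [MinkowskiWeyl.setOf_forall_nonneg_eq_dual,
    MinkowskiWeyl.setOf_exists_nonneg_sum_eq_hull]
  constructor
  · rintro ⟨m, q, rfl⟩
    obtain ⟨T, hT, hTq⟩ := MinkowskiWeyl.exists_hull_eq_dual (MinkowskiWeyl.isFiniteRat_range q)
    obtain ⟨n, v, rfl⟩ := hT.exists_fin_range_eq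
    exact ⟨n, v, by rw [hTq]⟩
  · rintro ⟨n, v, rfl⟩
    obtain ⟨T, hT, hTv⟩ := MinkowskiWeyl.exists_dual_eq_hull (MinkowskiWeyl.isFiniteRat_range v)
    obtain ⟨m, q, rfl⟩ := hT.exists_fin_range_eq
    exact ⟨m, q, by rw [hTv]⟩
end
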